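/- Discrete Poincaré inequality: there exists a constant K > 0, independent of N, such that for every grid function u vanishing on the boundary, ‖u‖ₕ ≤ K·‖u‖_{∇,h}, where ‖u‖ₕ² = ⟨u,u⟩ₕ and ‖u‖²_{∇,h} = ⟨∇ₓ⁺u,∇ₓ⁺u⟩ₕ + ⟨∇_y⁺u,∇_y⁺u⟩ₕ. In fact K = 2 works. -/

import Mathlib

open Finset

abbrev GF (N : ℕ) := Fin (N+1) × Fin (N+1) → ℝ

noncomputable def hh (N : ℕ) : ℝ := 1 / N

/-- forward shift in x -/
def tauxp (N : ℕ) (u : GF N) : GF N :=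
  fun p => if h : (p.1 : ℕ) < N then u (⟨p.1 + 1, by omega⟩, p.2) else 0

/-- backward shift in x -/
def tauxm (N : ℕ) (u : GF N) : GF N :=
  fun p => if h : 0 < (p.1 : ℕ) then u (⟨(p.1 : ℕ) - 1, by omega⟩, p.2) else 0

/-- forward difference in x -/
noncomputable def dxp (N : ℕ) (u : GF N) : GF N :=
  fun p => if h : (p.1 : ℕ) < N then (u (⟨p.1 + 1, by omega⟩, p.2) - u p) / hh N else 0

/-- backward difference in x -/
noncomputable def dxm (N : ℕ) (u : GF N) : GF N :=
  fun p => if h : 0 < (p.1 : ℕ) then (u p - u (⟨(p.1 : ℕ) - 1, by omega⟩, p.2)) / hh N else 0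

/-- forward difference in y -/
noncomputable def dyp (N : ℕ) (u : GF N) : GF N :=
  fun p => if h : (p.2 : ℕ) < N then (u (p.1, ⟨p.2 + 1, by omega⟩) - u p) / hh N else 0

/-- backward difference in y -/
noncomputable def dym (N : ℕ) (u : GF N) : GF N :=
  fun p => if h : 0 < (p.2 : ℕ) then (u p - u (p.1, ⟨(p.2 : ℕ) - 1, by omega⟩)) / hh N else 0

/-- discrete scalar product -/
noncomputable def iph (N : ℕ) (u v : GF N) : ℝ :=
  (hh N)^2 * ∑ p : Fin (N+1) × Fin (N+1), u p * v p

/-- discrete norm -/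
noncomputable def nh (N : ℕ) (u : GF N) : ℝ := Real.sqrt (iph N u u)

/-- boundary points of the grid -/
def OnBoundary (N : ℕ) (p : Fin (N+1) × Fin (N+1)) : Prop :=
  (p.1 : ℕ) = 0 ∨ (p.1 : ℕ) = N ∨ (p.2 : ℕ) = 0 ∨ (p.2 : ℕ) = N

section Aux

lemma hh_pos {N : ℕ} (hN : 1 ≤ N) : 0 < hh N := by
  unfold hh
  have : (0:ℝ) < N := by exact_mod_cast hN
  positivity

lemma telescope (N : ℕ) (hN : 1 ≤ N) (u : GF N)
    (hbc : ∀ p : Fin (N+1) × Fin (N+1), OnBoundary N p → u p = 0)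
    (j : Fin (N+1)) :
    ∀ n (hn : n ≤ N), u (⟨n, by omega⟩, j) =
      hh N * ∑ k ∈ Finset.range n, dxp N u (⟨min k N, by omega⟩, j) := by
  intro n
  induction n with
  | zero =>
    intro _
    simp only [Finset.range_zero, Finset.sum_empty, mul_zero]
    exact hbc (⟨0, by omega⟩, j) (Or.inl rfl)
  | succ m ih =>
    intro hm
    have hmN : m < N := hm
    rw [Finset.sum_range_succ, mul_add, ← ih (by omega)]
    have hmin : min m N = m := Nat.min_eq_left (by omega)
    have : dxp N u (⟨min m N, by omega⟩, j)
        = (u (⟨m+1, by omega⟩, j) - u (⟨m, by omega⟩, j)) / hh N := by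
      simp only [dxp]
      rw [dif_pos (by simpa [hmin] using hmN)]
      congr 2 <;> simp [hmin]
    rw [this]
    have h0 := (hh_pos hN).ne'
    field_simp
    ring

end Aux

/-- discrete Poincaré inequality with constant K = 2, independent of N. -/
theorem discrete_poincare (N : ℕ) (hN : 1 ≤ N) (u : GF N)
    (hbc : ∀ p : Fin (N+1) × Fin (N+1), OnBoundary N p → u p = 0) :
    nh N u ≤ 2 * Real.sqrt ((nh N (dxp N u))^2 + (nh N (dyp N u))^2) := by
  have hhp := hh_pos hN
  have hNpos : (0:ℝ) < N := by exact_mod_cast hN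
  -- pointwise bound
  have key : ∀ p : Fin (N+1) × Fin (N+1),
      u p * u p ≤ hh N * ∑ q : Fin (N+1), dxp N u (q, p.2) * dxp N u (q, p.2) := by
    intro ⟨i, j⟩
    have htel := telescope N hN u hbc j i (by omega)
    have hi : (⟨(i:ℕ), by omega⟩ : Fin (N+1)) = i := by ext; rfl
    rw [hi] at htel
    have hcs : (∑ k ∈ Finset.range (i:ℕ), dxp N u (⟨min k N, by omega⟩, j))^2
        ≤ (i:ℕ) * ∑ k ∈ Finset.range (i:ℕ), (dxp N u (⟨min k N, by omega⟩, j))^2 := by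
      simpa using sq_sum_le_card_mul_sum_sq
        (s := Finset.range (i:ℕ)) (f := fun k => dxp N u (⟨min k N, by omega⟩, j))
    have hsub : ∑ k ∈ Finset.range (i:ℕ), (dxp N u (⟨min k N, by omega⟩, j))^2
        ≤ ∑ k ∈ Finset.range (N+1), (dxp N u (⟨min k N, by omega⟩, j))^2 := by
      apply Finset.sum_le_sum_of_subset_of_nonneg
      · exact Finset.range_subset_range.2 (by omega)
      · intro k _ _; positivity
    have hfin : ∑ k ∈ Finset.range (N+1), (dxp N u (⟨min k N, by omega⟩, j))^2
        = ∑ q : Fin (N+1), dxp N u (q, j) * dxp N u (q, j) := by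
      rw [Finset.sum_range fun k => (dxp N u (⟨min k N, by omega⟩, j))^2]
      apply Finset.sum_congr rfl
      intro q _
      have : (⟨min (q:ℕ) N, by omega⟩ : Fin (N+1)) = q := by
        ext; simp [Nat.min_eq_left (Nat.lt_succ_iff.mp q.isLt)]
      rw [this, sq]
    have hiN : ((i:ℕ) : ℝ) ≤ (N : ℝ) := by exact_mod_cast Nat.lt_succ_iff.mp i.isLt
    calc u (i, j) * u (i, j)
        = (hh N)^2 * (∑ k ∈ Finset.range (i:ℕ), dxp N u (⟨min k N, by omega⟩, j))^2 := by
          rw [htel]; ring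
      _ ≤ (hh N)^2 * ((N:ℝ) * ∑ q : Fin (N+1), dxp N u (q, j) * dxp N u (q, j)) := by
          apply mul_le_mul_of_nonneg_left _ (by positivity)
          calc (∑ k ∈ Finset.range (i:ℕ), dxp N u (⟨min k N, by omega⟩, j))^2
              ≤ (i:ℕ) * ∑ k ∈ Finset.range (i:ℕ), (dxp N u (⟨min k N, by omega⟩, j))^2 := hcs
            _ ≤ (N:ℝ) * ∑ k ∈ Finset.range (N+1), (dxp N u (⟨min k N, by omega⟩, j))^2 := by
                apply mul_le_mul hiN hsub (Finset.sum_nonneg fun k _ => by positivity) (by positivity)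
            _ = (N:ℝ) * ∑ q : Fin (N+1), dxp N u (q, j) * dxp N u (q, j) := by rw [hfin]
      _ = hh N * ∑ q : Fin (N+1), dxp N u (q, j) * dxp N u (q, j) := by
          have : (hh N)^2 * (N:ℝ) = hh N := by
            unfold hh; field_simp
          rw [← mul_assoc, this]
  -- sum the pointwise bound
  have sum_bound : ∑ p : Fin (N+1) × Fin (N+1), u p * u p
      ≤ 2 * ∑ p : Fin (N+1) × Fin (N+1), dxp N u p * dxp N u p := by
    calc ∑ p : Fin (N+1) × Fin (N+1), u p * u p
        ≤ ∑ p : Fin (N+1) × Fin (N+1), hh N * ∑ q : Fin (N+1), dxp N u (q, p.2) * dxp N u (q, p.2) :=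
          Finset.sum_le_sum fun p _ => key p
      _ = (N+1) * hh N * ∑ p : Fin (N+1) × Fin (N+1), dxp N u p * dxp N u p := by
          rw [Fintype.sum_prod_type]
          rw [Fintype.sum_prod_type]
          simp only [← Finset.mul_sum]
          rw [Finset.sum_const, Finset.card_univ, Fintype.card_fin]
          rw [Finset.sum_comm]
          push_cast
          ring
      _ ≤ 2 * ∑ p : Fin (N+1) × Fin (N+1), dxp N u p * dxp N u p := by
          apply mul_le_mul_of_nonneg_right _ (Finset.sum_nonneg fun p _ => mul_self_nonneg _)
          have : ((N:ℝ)+1) * hh N = ((N:ℝ)+1)/N := by unfold hh; ring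
          rw [this, div_le_iff₀ hNpos]
          have h1N : (1:ℝ) ≤ (N:ℝ) := by exact_mod_cast hN
          linarith
  -- assemble
  have hA : iph N u u ≤ 2 * iph N (dxp N u) (dxp N u) := by
    unfold iph
    calc (hh N)^2 * ∑ p : Fin (N+1) × Fin (N+1), u p * u p
        ≤ (hh N)^2 * (2 * ∑ p : Fin (N+1) × Fin (N+1), dxp N u p * dxp N u p) :=
          mul_le_mul_of_nonneg_left sum_bound (by positivity)
      _ = 2 * ((hh N)^2 * ∑ p : Fin (N+1) × Fin (N+1), dxp N u p * dxp N u p) := by ring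
  have hx0 : 0 ≤ iph N (dxp N u) (dxp N u) := by
    unfold iph
    apply mul_nonneg (by positivity) (Finset.sum_nonneg fun p _ => mul_self_nonneg _)
  have hy0 : 0 ≤ iph N (dyp N u) (dyp N u) := by
    unfold iph
    apply mul_nonneg (by positivity) (Finset.sum_nonneg fun p _ => mul_self_nonneg _)
  have hxsq : (nh N (dxp N u))^2 = iph N (dxp N u) (dxp N u) := Real.sq_sqrt hx0
  have hysq : (nh N (dyp N u))^2 = iph N (dyp N u) (dyp N u) := Real.sq_sqrt hy0
  rw [hxsq, hysq]
  show Real.sqrt (iph N u u)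
      ≤ 2 * Real.sqrt (iph N (dxp N u) (dxp N u) + iph N (dyp N u) (dyp N u))
  rw [show (2:ℝ) * Real.sqrt (iph N (dxp N u) (dxp N u) + iph N (dyp N u) (dyp N u))
      = Real.sqrt (4 * (iph N (dxp N u) (dxp N u) + iph N (dyp N u) (dyp N u))) by
    rw [show (4:ℝ) = 2^2 by norm_num, Real.sqrt_mul (by positivity), Real.sqrt_sq (by norm_num)]]
  apply Real.sqrt_le_sqrt
  linarith
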